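/- arXiv:2405.02617 — 4 statements merged into one kernel-verified Lean document; each statement's English description precedes it below -/
import Mathlib

section
/- If a univariate real polynomial F(x) = Σᵢ₌₀ᵈ aᵢxⁱ with all coefficients positive is real-rooted (all its complex roots are real), then its coefficient sequence is log-concave: aⱼ² ≥ aⱼ₋₁·aⱼ₊₁ for all 1 ≤ j ≤ d−1. -/
/-!
Positive coefficients keep every real root on the negative axis, so a real-rooted `F` factors as
`c * ∏ (X + rᵢ)` with `c, rᵢ > 0`. Multiplying by `X + r`, `r ≥ 0`, preserves log-concavity of a
coefficient sequence that is positive up to the degree: such a sequence also satisfies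
`q k * q (k + 3) ≤ q (k + 1) * q (k + 2)`, which controls the cross term.
-/

open Polynomial

namespace Polynomial

variable {R : Type*}

section Semiring

variable [Semiring R]

theorem coeff_X_add_C_mul_zero (p : R[X]) (r : R) : ((X + C r) * p).coeff 0 = r * p.coeff 0 := by
  simp [add_mul]

theorem coeff_X_add_C_mul_succ (p : R[X]) (r : R) (n : ℕ) :
    ((X + C r) * p).coeff (n + 1) = p.coeff n + r * p.coeff (n + 1) := by
  rw [add_mul, coeff_add, coeff_X_mul, coeff_C_mul]

variable [Preorder R]

def CoeffPos (p : R[X]) : Prop := ∀ i ≤ p.natDegree, 0 < p.coeff i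

def CoeffLogConcave (p : R[X]) : Prop := ∀ j, p.coeff j * p.coeff (j + 2) ≤ p.coeff (j + 1) ^ 2

variable {p : R[X]}

theorem CoeffPos.coeff_nonneg (hp : CoeffPos p) (i : ℕ) : 0 ≤ p.coeff i := by
  rcases le_or_gt i p.natDegree with hi | hi
  · exact (hp i hi).le
  · exact (coeff_eq_zero_of_natDegree_lt hi).ge

theorem CoeffPos.ne_zero (hp : CoeffPos p) : p ≠ 0 := by
  rintro rfl
  simpa using hp 0 le_rfl

theorem coeffPos_C {c : R} (hc : 0 < c) : CoeffPos (C c) := by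
  intro i hi
  simp_all

theorem coeffLogConcave_C (c : R) : CoeffLogConcave (C c) := by
  intro j
  simp [coeff_C]

end Semiring

variable [CommRing R] [LinearOrder R] [IsStrictOrderedRing R] {p : R[X]}

theorem CoeffPos.eval_pos (hp : CoeffPos p) {x : R} (hx : 0 ≤ x) : 0 < p.eval x := by
  rw [eval_eq_sum_range]
  refine Finset.sum_pos' (fun i _ => mul_nonneg (hp.coeff_nonneg i) (pow_nonneg hx i))
    ⟨0, Finset.mem_range.mpr p.natDegree.succ_pos, ?_⟩
  simpa using hp 0 (Nat.zero_le _)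

theorem CoeffPos.X_add_C_mul (hp : CoeffPos p) {r : R} (hr : 0 < r) :
    CoeffPos ((X + C r) * p) := by
  rw [CoeffPos, (monic_X_add_C r).natDegree_mul' hp.ne_zero, natDegree_X_add_C]
  rintro (_ | n) hn
  · rw [coeff_X_add_C_mul_zero]
    exact mul_pos hr (hp 0 (Nat.zero_le _))
  · rw [coeff_X_add_C_mul_succ]
    exact add_pos_of_pos_of_nonneg (hp n (by omega)) (mul_nonneg hr.le (hp.coeff_nonneg _))

theorem CoeffLogConcave.coeff_mul_coeff_le (hlc : CoeffLogConcave p) (hp : CoeffPos p) (k : ℕ) :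
    p.coeff k * p.coeff (k + 3) ≤ p.coeff (k + 1) * p.coeff (k + 2) := by
  rcases le_or_gt (k + 3) p.natDegree with hk | hk
  · have hmid : 0 < p.coeff (k + 1) * p.coeff (k + 2) := mul_pos (hp _ (by omega)) (hp _ (by omega))
    refine le_of_mul_le_mul_right ?_ hmid
    calc p.coeff k * p.coeff (k + 3) * (p.coeff (k + 1) * p.coeff (k + 2))
        = (p.coeff k * p.coeff (k + 2)) * (p.coeff (k + 1) * p.coeff (k + 3)) := by ring
      _ ≤ p.coeff (k + 1) ^ 2 * p.coeff (k + 2) ^ 2 :=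
          mul_le_mul (hlc k) (hlc (k + 1)) (mul_nonneg (hp.coeff_nonneg _) (hp.coeff_nonneg _))
            (sq_nonneg _)
      _ = p.coeff (k + 1) * p.coeff (k + 2) * (p.coeff (k + 1) * p.coeff (k + 2)) := by ring
  · rw [coeff_eq_zero_of_natDegree_lt hk, mul_zero]
    exact mul_nonneg (hp.coeff_nonneg _) (hp.coeff_nonneg _)

theorem add_mul_mul_add_mul_le_sq {r q₀ q₁ q₂ q₃ : R} (hr : 0 ≤ r)
    (h₀₂ : q₀ * q₂ ≤ q₁ ^ 2) (h₁₃ : q₁ * q₃ ≤ q₂ ^ 2) (h₀₃ : q₀ * q₃ ≤ q₁ * q₂) :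
    (q₀ + r * q₁) * (q₂ + r * q₃) ≤ (q₁ + r * q₂) ^ 2 := by
  nlinarith [mul_le_mul_of_nonneg_left h₀₃ hr, mul_le_mul_of_nonneg_left h₁₃ (mul_nonneg hr hr)]

theorem CoeffLogConcave.X_add_C_mul (hlc : CoeffLogConcave p) (hp : CoeffPos p) {r : R}
    (hr : 0 ≤ r) : CoeffLogConcave ((X + C r) * p) := by
  rintro (_ | k)
  · have := add_mul_mul_add_mul_le_sq (q₀ := 0) hr (by simpa using sq_nonneg (p.coeff 0)) (hlc 0)
      (by simpa using mul_nonneg (hp.coeff_nonneg 0) (hp.coeff_nonneg 1))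
    simpa [coeff_X_add_C_mul_zero, coeff_X_add_C_mul_succ] using this
  · simpa [coeff_X_add_C_mul_succ, add_assoc] using
      add_mul_mul_add_mul_le_sq hr (hlc k) (hlc (k + 1)) (hlc.coeff_mul_coeff_le hp k)

theorem coeffPos_and_coeffLogConcave_C_mul_prod {c : R} (hc : 0 < c) {s : Multiset R}
    (hs : ∀ a ∈ s, a < 0) :
    CoeffPos (C c * (s.map (X - C ·)).prod) ∧ CoeffLogConcave (C c * (s.map (X - C ·)).prod) := by
  induction s using Multiset.induction_on with
  | empty => simpa using ⟨coeffPos_C hc, coeffLogConcave_C c⟩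
  | cons a s ih =>
    obtain ⟨hpos, hlc⟩ := ih fun b hb => hs b (Multiset.mem_cons_of_mem hb)
    have ha : 0 < -a := neg_pos.mpr (hs a (Multiset.mem_cons_self a s))
    have hfactor : C c * ((a ::ₘ s).map (X - C ·)).prod =
        (X + C (-a)) * (C c * (s.map (X - C ·)).prod) := by
      rw [Multiset.map_cons, Multiset.prod_cons, C_neg, ← sub_eq_add_neg]
      ring
    rw [hfactor]
    exact ⟨hpos.X_add_C_mul ha, hlc.X_add_C_mul hpos ha.le⟩

theorem splits_of_forall_aeval_eq_zero_im_eq_zero {F : ℝ[X]}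
    (h : ∀ z : ℂ, aeval z F = 0 → z.im = 0) : F.Splits := by
  refine Splits.of_splits_map (algebraMap ℝ ℂ) (IsAlgClosed.splits _) fun z hz => ?_
  have hz : aeval z F = 0 := by
    simpa [IsRoot, eval_map, ← aeval_def] using isRoot_of_mem_roots hz
  exact ⟨z.re, Complex.ext (by simp) (by simp [h z hz])⟩

end Polynomial

/-- Newton's inequality: if a real polynomial `F = Σ_{i=0}^d aᵢ xⁱ` of degree `d`
with all coefficients positive is real-rooted (all complex roots are real), then its coefficient
sequence is log-concave: `a_j² ≥ a_{j-1}·a_{j+1}` for all `1 ≤ j ≤ d-1`. -/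
theorem realRooted_logConcave (F : Polynomial ℝ) (d : ℕ) (hd : F.natDegree = d)
    (hpos : ∀ i ≤ d, 0 < F.coeff i)
    (hroots : ∀ z : ℂ, Polynomial.aeval z F = 0 → z.im = 0) :
    ∀ j : ℕ, 1 ≤ j → j ≤ d - 1 →
      F.coeff (j - 1) * F.coeff (j + 1) ≤ (F.coeff j) ^ 2 := by
  have hF : CoeffPos F := fun i hi => hpos i (hd ▸ hi)
  have hneg : ∀ a ∈ F.roots, a < 0 := fun a ha => by
    by_contra! h
    exact (hF.eval_pos h).ne' (isRoot_of_mem_roots ha)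
  have hlc := (coeffPos_and_coeffLogConcave_C_mul_prod (hF _ le_rfl) hneg).2
  rw [← leadingCoeff, ← (splits_of_forall_aeval_eq_zero_im_eq_zero hroots).eq_prod_roots] at hlc
  rintro (_ | k) hk -
  · omega
  · simpa using hlc k
end

section
/- If a univariate real polynomial F(x) = Σᵢ₌₀ᵈ aᵢxⁱ of degree d ≥ 2 with positive coefficients is real-rooted, then its coefficients are α-concave with α = α(d,i) = ((d−i+1)/(d−i))·((i+1)/i); that is, aᵢ² ≥ α(d,i)·aᵢ₋₁·aᵢ₊₁ for all 1 ≤ i ≤ d−1. -/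
/-!
Over `ℝ`, splitting is preserved by differentiation (Rolle's theorem: `p'` loses at most one
root counted with multiplicity) and by reversal `p ↦ Xⁿ p(1/X)`. Differentiating `F` `i - 1`
times, reversing, and differentiating `d - i - 1` more times leaves a split quadratic whose
coefficients are factorial multiples of `aᵢ₊₁, aᵢ, aᵢ₋₁`; its discriminant is nonnegative,
and clearing the factorials gives Newton's inequality
`(i + 1)(d - i + 1) aᵢ₋₁ aᵢ₊₁ ≤ i (d - i) aᵢ²`.
-/

open Polynomial

namespace Polynomial

theorem Splits.of_complex_roots_real {p : ℝ[X]}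
    (h : ∀ z : ℂ, aeval z p = 0 → z.im = 0) : p.Splits := by
  refine Splits.of_splits_map (algebraMap ℝ ℂ) (IsAlgClosed.splits _) fun z hz ↦ ?_
  have hz0 : aeval z p = 0 := by
    rw [aeval_def, eval₂_eq_eval_map]
    exact isRoot_of_mem_roots hz
  exact ⟨z.re, Complex.ext (by simp) (by simp [h z hz0])⟩

theorem Splits.reverse {K : Type*} [Field K] {p : K[X]} (hp : p.Splits) : p.reverse.Splits := by
  induction hp using Submonoid.closure_induction with
  | mem f hf =>
    obtain ⟨a, rfl⟩ | ⟨a, rfl⟩ := hf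
    · rw [reverse_C]
      exact Splits.C a
    · refine Splits.of_natDegree_le_one ((reverse_natDegree_le _).trans ?_)
      exact natDegree_add_C.trans_le natDegree_X_le
  | one =>
    rw [← C_1, reverse_C]
    exact Splits.C 1
  | mul f g _ _ hf hg => simpa [reverse_mul_of_domain] using hf.mul hg

theorem Splits.iterate_derivative {p : ℝ[X]} (hp : p.Splits) (k : ℕ) :
    (derivative^[k] p).Splits := by
  induction k with
  | zero => exact hp
  | succ k ih =>
    rw [Function.iterate_succ_apply', splits_iff_card_roots]
    rw [splits_iff_card_roots] at ih
    have := card_roots_le_derivative (derivative^[k] p)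
    have := card_roots' (derivative (derivative^[k] p))
    have := natDegree_derivative_le (derivative^[k] p)
    omega

theorem Splits.discrim_nonneg {K : Type*} [Field K] [LinearOrder K] [IsStrictOrderedRing K]
    {q : K[X]} (hq : q.Splits) (hdeg : q.natDegree ≤ 2) :
    0 ≤ discrim (q.coeff 2) (q.coeff 1) (q.coeff 0) := by
  by_cases h2 : q.coeff 2 = 0
  · simp [discrim, h2, sq_nonneg]
  have hdeg2 : q.natDegree = 2 := le_antisymm hdeg (le_natDegree_of_ne_zero h2)
  obtain ⟨x, hx⟩ := hq.exists_eval_eq_zero (natDegree_pos_iff_degree_pos.mp (by omega)).ne'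
  rw [eval_eq_sum_range, hdeg2] at hx
  simp only [Finset.sum_range_succ, Finset.sum_range_zero] at hx
  rw [discrim_eq_sq_of_quadratic_eq_zero (x := x) (by linear_combination hx)]
  exact sq_nonneg _

section IterateDerivativeCoeff

variable {R : Type*} [CommRing R] (p : R[X]) (k : ℕ)

theorem factorial_mul_coeff_iterate_derivative (t : ℕ) :
    (t.factorial : R) * (derivative^[k] p).coeff t = (k + t).factorial * p.coeff (k + t) := by
  have h := Nat.factorial_mul_descFactorial (Nat.le_add_right k t)
  rw [Nat.add_sub_cancel_left] at h
  rw [coeff_iterate_derivative, add_comm t, nsmul_eq_mul, ← mul_assoc, ← Nat.cast_mul, h]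

theorem coeff_zero_iterate_derivative :
    (derivative^[k] p).coeff 0 = k.factorial * p.coeff k := by
  simpa using factorial_mul_coeff_iterate_derivative p k 0

theorem coeff_one_iterate_derivative :
    (derivative^[k] p).coeff 1 = (k + 1) * k.factorial * p.coeff (k + 1) := by
  simpa [Nat.factorial_succ] using factorial_mul_coeff_iterate_derivative p k 1

theorem two_mul_coeff_two_iterate_derivative :
    2 * (derivative^[k] p).coeff 2 = (k + 2) * (k + 1) * k.factorial * p.coeff (k + 2) := by
  have h := factorial_mul_coeff_iterate_derivative p k 2
  push_cast [Nat.factorial_succ] at h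
  linear_combination h

end IterateDerivativeCoeff

theorem Splits.newton_inequality_zero {p : ℝ[X]} (hp : p.Splits) {e : ℕ}
    (hdeg : p.natDegree = e + 2) :
    2 * ((e : ℝ) + 2) * (p.coeff 0 * p.coeff 2) ≤ ((e : ℝ) + 1) * p.coeff 1 ^ 2 := by
  have hQ := (hp.reverse.iterate_derivative e).discrim_nonneg
    ((natDegree_iterate_derivative _ e).trans (by have := reverse_natDegree_le p; omega))
  obtain ⟨h0, h1, h2⟩ : p.reverse.coeff e = p.coeff 2 ∧
      p.reverse.coeff (e + 1) = p.coeff 1 ∧ p.reverse.coeff (e + 2) = p.coeff 0 := by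
    refine ⟨?_, ?_, ?_⟩ <;> rw [coeff_reverse, hdeg, revAt_le (by omega)] <;> congr 1 <;> omega
  have hQ2 := two_mul_coeff_two_iterate_derivative p.reverse e
  rw [discrim, coeff_zero_iterate_derivative, coeff_one_iterate_derivative, h0, h1] at hQ
  rw [h2] at hQ2
  refine le_of_mul_le_mul_left ?_ (by positivity : (0 : ℝ) < (e + 1) * e.factorial ^ 2)
  linear_combination hQ - 2 * e.factorial * p.coeff 2 * hQ2

theorem Splits.newton_inequality {p : ℝ[X]} (hp : p.Splits) {m e : ℕ}
    (hdeg : p.natDegree = m + e + 2) :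
    ((m : ℝ) + 2) * (e + 2) * (p.coeff m * p.coeff (m + 2)) ≤
      ((m : ℝ) + 1) * (e + 1) * p.coeff (m + 1) ^ 2 := by
  have hlead : p.coeff (m + (e + 2)) ≠ 0 := by
    rw [← add_assoc, ← hdeg, coeff_natDegree, leadingCoeff_ne_zero]
    rintro rfl
    simp at hdeg
  have hG : (derivative^[m] p).natDegree = e + 2 := by
    refine le_antisymm ((natDegree_iterate_derivative p m).trans (by omega))
      (le_natDegree_of_ne_zero (right_ne_zero_of_mul (a := ((e + 2).factorial : ℝ)) ?_))
    rw [factorial_mul_coeff_iterate_derivative]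
    exact mul_ne_zero (by positivity) hlead
  have h := (hp.iterate_derivative m).newton_inequality_zero hG
  have hG2 := two_mul_coeff_two_iterate_derivative p m
  rw [coeff_zero_iterate_derivative, coeff_one_iterate_derivative] at h
  refine le_of_mul_le_mul_left ?_ (by positivity : (0 : ℝ) < (m + 1) * m.factorial ^ 2)
  linear_combination h - (e + 2) * m.factorial * p.coeff m * hG2

end Polynomial

theorem realRooted_alphaConcave_general (F : Polynomial ℝ) (d : ℕ) (hd : F.natDegree = d)
    (hroots : ∀ z : ℂ, Polynomial.aeval z F = 0 → z.im = 0) :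
    ∀ i : ℕ, 1 ≤ i → i ≤ d - 1 →
      (((d : ℝ) - i + 1) / ((d : ℝ) - i)) * (((i : ℝ) + 1) / (i : ℝ)) *
          (F.coeff (i - 1) * F.coeff (i + 1)) ≤ (F.coeff i) ^ 2 := by
  intro i hi1 hi2
  obtain ⟨m, rfl⟩ : ∃ m, i = m + 1 := ⟨i - 1, by omega⟩
  obtain ⟨e, rfl⟩ : ∃ e, d = m + e + 2 := ⟨d - m - 2, by omega⟩
  have h := (Splits.of_complex_roots_real hroots).newton_inequality hd
  push_cast
  rw [show m + 1 + 1 = m + 2 by rfl,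
    show (m : ℝ) + e + 2 - (m + 1) = e + 1 by ring, div_mul_div_comm, div_mul_eq_mul_div,
    div_le_iff₀ (by positivity)]
  linear_combination h

/-- Kurtz, part (i): if a real polynomial `F = Σ_{i=0}^d aᵢ xⁱ` of degree `d ≥ 2`
with positive coefficients is real-rooted, then for all `1 ≤ i ≤ d-1` we have
`aᵢ² ≥ α(d,i)·a_{i-1}·a_{i+1}` with `α(d,i) = ((d-i+1)/(d-i))·((i+1)/i)`. -/
theorem realRooted_alphaConcave (F : Polynomial ℝ) (d : ℕ) (hd : F.natDegree = d)
    (hd2 : 2 ≤ d)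
    (hpos : ∀ i ≤ d, 0 < F.coeff i)
    (hroots : ∀ z : ℂ, Polynomial.aeval z F = 0 → z.im = 0) :
    ∀ i : ℕ, 1 ≤ i → i ≤ d - 1 →
      (((d : ℝ) - i + 1) / ((d : ℝ) - i)) * (((i : ℝ) + 1) / (i : ℝ)) *
          (F.coeff (i - 1) * F.coeff (i + 1)) ≤ (F.coeff i) ^ 2 :=
  realRooted_alphaConcave_general F d hd hroots
end

section
/- For every finite simple graph G, the matching defect polynomial M(G;x) = Σ_k (−1)^k m_k(G) x^{n−2k} is real-rooted, where m_k(G) is the number of k-matchings of G and n = |V(G)|. -/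
open Polynomial
open scoped Classical

/-- The number `m_k(G)` of `k`-matchings (sets of `k` pairwise disjoint edges) of `G`. -/
noncomputable def matchCount {V : Type} [Fintype V] (G : SimpleGraph V) (k : ℕ) : ℕ :=
  ((G.edgeFinset.powersetCard k).filter
    (fun s => ∀ e ∈ s, ∀ f ∈ s, e ≠ f → ∀ v : V, v ∈ e → v ∉ f)).card

/-- The matching defect polynomial `M(G;x) = Σ_k (−1)^k m_k(G) x^{n−2k}` (real coefficients). -/
noncomputable def defectPoly {V : Type} [Fintype V] (G : SimpleGraph V) : Polynomial ℝ :=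
  ∑ k ∈ Finset.range (Fintype.card V + 1),
    ((-1 : ℝ) ^ k * (matchCount G k : ℝ)) • X ^ (Fintype.card V - 2 * k)

/-!
For `W ⊆ V` let `μ_W = G.defectPolyOn W` be the defect polynomial of the subgraph induced on `W`.
Sorting the matchings by whether a vertex `v ∈ W` is unmatched or matched to a neighbour `u` gives
`μ_W = x μ_{W-v} - Σ_{u ~ v} μ_{W-v-u}`, so that for `Im z > 0`
`μ_W(z) / μ_{W-v}(z) = z - Σ_{u ~ v} (μ_{W-v}(z) / μ_{W-v-u}(z))⁻¹`.
Since `w ↦ -w⁻¹` preserves the closed upper half-plane, induction on `W` shows that every such ratio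
has imaginary part at least `Im z`. Hence `μ_V` has no zero with `Im z > 0`, and, its coefficients
being real, none with `Im z < 0` either.
-/

lemma Complex.inv_im_nonpos {w : ℂ} (hw : 0 ≤ w.im) : w⁻¹.im ≤ 0 := by
  rw [Complex.inv_im]
  exact div_nonpos_of_nonpos_of_nonneg (neg_nonpos.2 hw) (Complex.normSq_nonneg w)

theorem Polynomial.im_eq_zero_of_aeval_eq_zero {p : ℝ[X]}
    (hp : ∀ z : ℂ, 0 < z.im → aeval z p ≠ 0) {z : ℂ} (hz : aeval z p = 0) : z.im = 0 := by
  rcases lt_trichotomy z.im 0 with h | h | h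
  · refine absurd ?_ (hp (starRingEnd ℂ z) (by simpa using h))
    rw [aeval_conj, hz, map_zero]
  · exact h
  · exact absurd hz (hp z h)

namespace SimpleGraph

variable {V : Type} [Fintype V] (G : SimpleGraph V)

noncomputable def matchingsOn (W : Finset V) : Finset (Finset (Sym2 V)) :=
  G.edgeFinset.powerset.filter fun M =>
    (∀ e ∈ M, ∀ w ∈ e, w ∈ W) ∧ ∀ e ∈ M, ∀ f ∈ M, e ≠ f → ∀ v : V, v ∈ e → v ∉ f

noncomputable def defectPolyOn (W : Finset V) : ℝ[X] :=
  ∑ M ∈ G.matchingsOn W, ((-1 : ℝ) ^ M.card) • X ^ (W.card - 2 * M.card)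

variable {G} {W : Finset V} {M : Finset (Sym2 V)} {u v : V}

lemma mem_matchingsOn : M ∈ G.matchingsOn W ↔ M ⊆ G.edgeFinset ∧ (∀ e ∈ M, ∀ w ∈ e, w ∈ W) ∧
    ∀ e ∈ M, ∀ f ∈ M, e ≠ f → ∀ v : V, v ∈ e → v ∉ f := by
  simp only [matchingsOn, Finset.mem_filter, Finset.mem_powerset]

lemma two_mul_card_le_of_mem_matchingsOn (hM : M ∈ G.matchingsOn W) : 2 * M.card ≤ W.card := by
  obtain ⟨hE, hW, hD⟩ := mem_matchingsOn.1 hM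
  have hdisj : (M : Set (Sym2 V)).PairwiseDisjoint Sym2.toFinset := fun e he f hf hef =>
    Finset.disjoint_left.2 fun w hwe hwf =>
      hD e he f hf hef w (Sym2.mem_toFinset.1 hwe) (Sym2.mem_toFinset.1 hwf)
  calc 2 * M.card = ∑ e ∈ M, e.toFinset.card := by
        rw [Finset.sum_congr rfl fun e he => Sym2.card_toFinset_of_not_isDiag e
          (G.not_isDiag_of_mem_edgeFinset (hE he)), Finset.sum_const, smul_eq_mul, mul_comm]
    _ = (M.biUnion Sym2.toFinset).card := (Finset.card_biUnion hdisj).symm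
    _ ≤ W.card := Finset.card_le_card fun w hw => by
        obtain ⟨e, he, hwe⟩ := Finset.mem_biUnion.1 hw
        exact hW e he w (Sym2.mem_toFinset.1 hwe)

lemma matchingsOn_empty : G.matchingsOn ∅ = {∅} := by
  ext M
  rw [mem_matchingsOn, Finset.mem_singleton]
  constructor
  · rintro ⟨-, hW, -⟩
    refine Finset.eq_empty_of_forall_notMem fun e he => ?_
    induction e using Sym2.ind with
    | _ a b => exact Finset.notMem_empty a (hW _ he a (Sym2.mem_mk_left a b))
  · rintro rfl
    simp

@[simp]
lemma defectPolyOn_empty : G.defectPolyOn ∅ = 1 := by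
  simp [defectPolyOn, matchingsOn_empty]

lemma matchingsOn_erase :
    G.matchingsOn (W.erase v) = (G.matchingsOn W).filter fun M => ∀ e ∈ M, v ∉ e := by
  ext M
  simp only [Finset.mem_filter, mem_matchingsOn, Finset.mem_erase]
  constructor
  · rintro ⟨hE, hW, hD⟩
    exact ⟨⟨hE, fun e he w hw => (hW e he w hw).2, hD⟩, fun e he hv => (hW e he v hv).1 rfl⟩
  · rintro ⟨⟨hE, hW, hD⟩, hv⟩
    exact ⟨hE, fun e he w hw => ⟨fun h => hv e he (h ▸ hw), hW e he w hw⟩, hD⟩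

lemma erase_mem_matchingsOn (hM : M ∈ G.matchingsOn W) (he : s(v, u) ∈ M) :
    M.erase s(v, u) ∈ G.matchingsOn ((W.erase v).erase u) := by
  obtain ⟨hE, hW, hD⟩ := mem_matchingsOn.1 hM
  refine mem_matchingsOn.2 ⟨(Finset.erase_subset _ _).trans hE, fun f hf w hw => ?_,
    fun f hf g hg => hD f (Finset.mem_of_mem_erase hf) g (Finset.mem_of_mem_erase hg)⟩
  obtain ⟨hfe, hfM⟩ := Finset.mem_erase.1 hf
  have hw' : w ∉ s(v, u) := fun h => hD _ he f hfM hfe.symm w h hw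
  simp only [Sym2.mem_iff, not_or] at hw'
  exact Finset.mem_erase.2 ⟨hw'.2, Finset.mem_erase.2 ⟨hw'.1, hW f hfM w hw⟩⟩

lemma insert_mem_matchingsOn (huv : G.Adj v u) (hv : v ∈ W) (hu : u ∈ W)
    (hM : M ∈ G.matchingsOn ((W.erase v).erase u)) : insert s(v, u) M ∈ G.matchingsOn W := by
  obtain ⟨hE, hW, hD⟩ := mem_matchingsOn.1 hM
  have hfresh : ∀ f ∈ M, ∀ w ∈ f, w ∉ s(v, u) := fun f hf w hw h => by
    have := hW f hf w hw
    rcases Sym2.mem_iff.1 h with rfl | rfl <;> simp at this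
  refine mem_matchingsOn.2 ⟨Finset.insert_subset (G.mem_edgeFinset.2 huv) hE, ?_, ?_⟩
  · intro e he w hw
    rcases Finset.mem_insert.1 he with rfl | he
    · rcases Sym2.mem_iff.1 hw with rfl | rfl <;> assumption
    · exact Finset.mem_of_mem_erase (Finset.mem_of_mem_erase (hW e he w hw))
  · intro e he f hf hef w hwe hwf
    rcases Finset.mem_insert.1 he with rfl | he <;> rcases Finset.mem_insert.1 hf with rfl | hf
    · exact hef rfl
    · exact hfresh f hf w hwf hwe
    · exact hfresh e he w hwe hwf
    · exact hD e he f hf hef w hwe hwf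

lemma mk_notMem_of_mem_matchingsOn (hM : M ∈ G.matchingsOn W) (hv : v ∉ W) (u : V) :
    s(v, u) ∉ M :=
  fun h => hv ((mem_matchingsOn.1 hM).2.1 _ h v (Sym2.mem_mk_left v u))

lemma matchingsOn_filter_mem (huv : G.Adj v u) (hv : v ∈ W) (hu : u ∈ W) :
    (G.matchingsOn W).filter (s(v, u) ∈ ·) =
      (G.matchingsOn ((W.erase v).erase u)).image (insert s(v, u)) := by
  ext M
  simp only [Finset.mem_filter, Finset.mem_image]
  constructor
  · rintro ⟨hM, he⟩
    exact ⟨_, erase_mem_matchingsOn hM he, Finset.insert_erase he⟩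
  · rintro ⟨M, hM, rfl⟩
    exact ⟨insert_mem_matchingsOn huv hv hu hM, Finset.mem_insert_self _ _⟩

lemma filter_covers_eq_biUnion (v : V) :
    (G.matchingsOn W).filter (fun M => ¬∀ e ∈ M, v ∉ e) =
      ((W.erase v).filter (G.Adj v)).biUnion fun u => (G.matchingsOn W).filter (s(v, u) ∈ ·) := by
  ext M
  simp only [Finset.mem_filter, Finset.mem_biUnion, Finset.mem_erase, not_forall, not_not]
  constructor
  · rintro ⟨hM, e, he, hve⟩
    obtain ⟨u, rfl⟩ := Sym2.mem_iff_exists.1 hve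
    have huv : G.Adj v u := G.mem_edgeFinset.1 ((mem_matchingsOn.1 hM).1 he)
    exact ⟨u, ⟨⟨huv.ne', (mem_matchingsOn.1 hM).2.1 _ he u (Sym2.mem_mk_right v u)⟩, huv⟩, hM, he⟩
  · rintro ⟨u, -, hM, he⟩
    exact ⟨hM, _, he, Sym2.mem_mk_left v u⟩

lemma pairwise_disjoint_filter_mem (v : V) :
    Pairwise (Function.onFun Disjoint fun u => (G.matchingsOn W).filter (s(v, u) ∈ ·)) := by
  intro u u' huu'
  refine Finset.disjoint_left.2 fun M hM hM' => ?_
  obtain ⟨hM, he⟩ := Finset.mem_filter.1 hM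
  have hne : s(v, u) ≠ s(v, u') := fun h => huu' (Sym2.congr_right.1 h)
  exact (mem_matchingsOn.1 hM).2.2 _ he _ (Finset.mem_filter.1 hM').2 hne v
    (Sym2.mem_mk_left v u) (Sym2.mem_mk_left v u')

theorem defectPolyOn_eq_X_mul_sub (hv : v ∈ W) :
    G.defectPolyOn W = X * G.defectPolyOn (W.erase v) -
      ∑ u ∈ (W.erase v).filter (G.Adj v), G.defectPolyOn ((W.erase v).erase u) := by
  have hcard : W.card = (W.erase v).card + 1 := (Finset.card_erase_add_one hv).symm
  have unmatched : ∑ M ∈ (G.matchingsOn W).filter (fun M => ∀ e ∈ M, v ∉ e),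
      ((-1 : ℝ) ^ M.card) • (X : ℝ[X]) ^ (W.card - 2 * M.card) =
        X * G.defectPolyOn (W.erase v) := by
    rw [← matchingsOn_erase, defectPolyOn, Finset.mul_sum]
    refine Finset.sum_congr rfl fun M hM => ?_
    have := two_mul_card_le_of_mem_matchingsOn hM
    rw [mul_smul_comm, ← pow_succ', hcard, Nat.sub_add_comm this]
  have matched : ∀ u ∈ (W.erase v).filter (G.Adj v),
      ∑ M ∈ (G.matchingsOn W).filter (s(v, u) ∈ ·),
        ((-1 : ℝ) ^ M.card) • (X : ℝ[X]) ^ (W.card - 2 * M.card) =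
          -G.defectPolyOn ((W.erase v).erase u) := by
    intro u hu
    obtain ⟨⟨-, hu⟩, huv⟩ := by simpa only [Finset.mem_filter, Finset.mem_erase] using hu
    have hcard' : W.card = ((W.erase v).erase u).card + 2 := by
      rw [Finset.card_erase_of_mem (Finset.mem_erase.2 ⟨huv.ne', hu⟩), hcard]
      have := Finset.card_pos.2 ⟨u, Finset.mem_erase.2 ⟨huv.ne', hu⟩⟩
      omega
    have hv_notMem : v ∉ (W.erase v).erase u := by simp
    rw [matchingsOn_filter_mem huv hv hu, Finset.sum_image, defectPolyOn,
      ← Finset.sum_neg_distrib]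
    · refine Finset.sum_congr rfl fun M hM => ?_
      have := two_mul_card_le_of_mem_matchingsOn hM
      rw [Finset.card_insert_of_notMem (mk_notMem_of_mem_matchingsOn hM hv_notMem u), hcard',
        pow_succ, mul_neg_one, neg_smul, show ((W.erase v).erase u).card + 2 - 2 * (M.card + 1)
          = ((W.erase v).erase u).card - 2 * M.card by omega]
    · intro M hM M' hM' h
      rw [← Finset.erase_insert (mk_notMem_of_mem_matchingsOn hM hv_notMem u), h,
        Finset.erase_insert (mk_notMem_of_mem_matchingsOn hM' hv_notMem u)]
  rw [defectPolyOn, ← Finset.sum_filter_add_sum_filter_not _ (fun M => ∀ e ∈ M, v ∉ e),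
    unmatched, filter_covers_eq_biUnion,
    Finset.sum_biUnion ((pairwise_disjoint_filter_mem v).set_pairwise _),
    Finset.sum_congr rfl matched, Finset.sum_neg_distrib, sub_eq_add_neg]

section UpperHalfPlane

variable {z : ℂ}

lemma aeval_defectPolyOn_ne_zero_of_forall_im_le (hz : 0 < z.im)
    (h : ∀ v ∈ W, z.im ≤ (aeval z (G.defectPolyOn W) / aeval z (G.defectPolyOn (W.erase v))).im) :
    aeval z (G.defectPolyOn W) ≠ 0 := by
  rcases W.eq_empty_or_nonempty with rfl | ⟨v, hv⟩
  · simp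
  · intro h0
    have := h v hv
    rw [h0, zero_div, Complex.zero_im] at this
    linarith

theorem im_le_im_aeval_defectPolyOn_div (hz : 0 < z.im) (W : Finset V) :
    ∀ v ∈ W, z.im ≤ (aeval z (G.defectPolyOn W) / aeval z (G.defectPolyOn (W.erase v))).im := by
  induction W using Finset.strongInduction with
  | H W ih =>
  intro v hv
  have ih' := ih _ (Finset.erase_ssubset hv)
  have hne := aeval_defectPolyOn_ne_zero_of_forall_im_le hz ih'
  have hratio : aeval z (G.defectPolyOn W) / aeval z (G.defectPolyOn (W.erase v)) =
      z - ∑ u ∈ (W.erase v).filter (G.Adj v), (aeval z (G.defectPolyOn (W.erase v)) /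
        aeval z (G.defectPolyOn ((W.erase v).erase u)))⁻¹ := by
    simp only [defectPolyOn_eq_X_mul_sub hv, map_sub, map_mul, aeval_X, map_sum, inv_div]
    rw [sub_div, Finset.sum_div, mul_div_cancel_right₀ _ hne]
  have hsum : (∑ u ∈ (W.erase v).filter (G.Adj v), (aeval z (G.defectPolyOn (W.erase v)) /
      aeval z (G.defectPolyOn ((W.erase v).erase u)))⁻¹).im ≤ 0 := by
    rw [Complex.im_sum]
    exact Finset.sum_nonpos fun u hu =>
      Complex.inv_im_nonpos (hz.le.trans (ih' u (Finset.mem_filter.1 hu).1))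
  rw [hratio, Complex.sub_im]
  linarith

theorem aeval_defectPolyOn_ne_zero (hz : 0 < z.im) (W : Finset V) :
    aeval z (G.defectPolyOn W) ≠ 0 :=
  aeval_defectPolyOn_ne_zero_of_forall_im_le hz (im_le_im_aeval_defectPolyOn_div hz W)

end UpperHalfPlane

theorem defectPoly_eq_defectPolyOn_univ :
    defectPoly G = G.defectPolyOn Finset.univ := by
  have hmaps : ∀ M ∈ G.matchingsOn Finset.univ, M.card ∈ Finset.range (Fintype.card V + 1) :=
    fun M hM => by
      have := two_mul_card_le_of_mem_matchingsOn hM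
      rw [Finset.card_univ] at this
      rw [Finset.mem_range]
      omega
  rw [defectPolyOn, ← Finset.sum_fiberwise_of_maps_to hmaps, defectPoly]
  refine Finset.sum_congr rfl fun k _ => ?_
  have hfiber : (G.matchingsOn Finset.univ).filter (·.card = k) =
      (G.edgeFinset.powersetCard k).filter
        fun s => ∀ e ∈ s, ∀ f ∈ s, e ≠ f → ∀ v : V, v ∈ e → v ∉ f := by
    ext M
    simp only [Finset.mem_filter, mem_matchingsOn, Finset.mem_powersetCard, Finset.mem_univ,
      implies_true, true_and]
    tauto
  rw [Finset.sum_congr rfl fun M hM => by rw [(Finset.mem_filter.1 hM).2, Finset.card_univ],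
    Finset.sum_const, hfiber, matchCount, ← Nat.cast_smul_eq_nsmul ℝ, smul_smul, mul_comm]

end SimpleGraph

/-- Heilmann–Lieb: for every finite simple graph `G`, the matching defect
polynomial `M(G;x)` is real-rooted: all its complex roots are real. -/
theorem defectPoly_realRooted {V : Type} [Fintype V] (G : SimpleGraph V) :
    ∀ z : ℂ, Polynomial.aeval z (defectPoly G) = 0 → z.im = 0 := by
  intro z
  refine Polynomial.im_eq_zero_of_aeval_eq_zero fun w hw => ?_
  rw [SimpleGraph.defectPoly_eq_defectPolyOn_univ]
  exact SimpleGraph.aeval_defectPolyOn_ne_zero hw Finset.univ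
end

section
/- For every finite simple graph G, the sequence m_0(G), m_1(G), …, m_{⌊n/2⌋}(G) of numbers of k-matchings is unimodal. -/
open scoped Classical

/-!
Unimodality follows from log-concavity, `m_k m_{k+2} ≤ m_{k+1}²`, since the sequence has no
internal zeros. For log-concavity we inject pairs `(A, B)` of a `k`- and a `(k+2)`-matching into
pairs of `(k+1)`-matchings. A connected graph has at most one more vertex than edges, so every
component of `A ∪ B` contains at most one more edge of `B` than of `A`, and vice versa. Listing
the components in a fixed order, these surpluses are the steps of a walk with steps in
`{-1, 0, 1}` ending at height `2`. Exchange `A` and `B` on the component of the first nonzero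
step after the last minimum of the walk: that step is `+1`, and afterwards the walk has its first
minimum right after it. The exchange preserves `A ∪ B`, hence the list of components, so the
exchanged component can be read off from the image, which makes the map injective.
-/

open Finset SimpleGraph

section Unimodal

variable {f : ℕ → ℕ}

lemma succ_succ_le_of_logConcave (hlc : ∀ k, f k * f (k + 2) ≤ f (k + 1) ^ 2)
    (hzero : ∀ k, f k = 0 → f (k + 1) = 0) {a : ℕ} (h : f (a + 1) ≤ f a) :
    f (a + 2) ≤ f (a + 1) := by
  rcases Nat.eq_zero_or_pos (f (a + 1)) with h0 | hpos
  · simp [hzero _ h0]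
  · refine Nat.le_of_mul_le_mul_left ?_ hpos
    calc f (a + 1) * f (a + 2) ≤ f a * f (a + 2) := Nat.mul_le_mul_right _ h
      _ ≤ f (a + 1) * f (a + 1) := (hlc a).trans_eq (sq _)

lemma antitoneOn_of_logConcave (hlc : ∀ k, f k * f (k + 2) ≤ f (k + 1) ^ 2)
    (hzero : ∀ k, f k = 0 → f (k + 1) = 0) {a : ℕ} (h : f (a + 1) ≤ f a) :
    AntitoneOn f {x | a ≤ x} := by
  refine antitoneOn_nat_Ici_of_succ_le fun n hn => ?_
  induction n, hn using Nat.le_induction with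
  | base => exact h
  | succ n _ ih => exact succ_succ_le_of_logConcave hlc hzero ih

theorem unimodal_of_logConcave (hlc : ∀ k, f k * f (k + 2) ≤ f (k + 1) ^ 2)
    (hzero : ∀ k, f k = 0 → f (k + 1) = 0) (N : ℕ) :
    ∃ k₀ ≤ N, (∀ i j, i < j → j ≤ k₀ → f i ≤ f j) ∧
      (∀ i j, k₀ ≤ i → i < j → j ≤ N → f j ≤ f i) := by
  obtain ⟨k₀, hk₀, hmax⟩ := (range (N + 1)).exists_max_image f ⟨0, by simp⟩
  have hmax' : ∀ j ≤ N, f j ≤ f k₀ := fun j hj => hmax j (by simpa [Nat.lt_succ_iff] using hj)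
  have hk₀N : k₀ ≤ N := by simpa [Nat.lt_succ_iff] using hk₀
  refine ⟨k₀, hk₀N, fun i j hij hjk => ?_, fun i j hki hij hjN => ?_⟩
  · have hmono : ∀ n < k₀, f n ≤ f (n + 1) := fun n hn => by
      by_contra! hdrop
      have := antitoneOn_of_logConcave hlc hzero hdrop.le (a := n)
        (show n + 1 ∈ {x | n ≤ x} by simp) (show k₀ ∈ {x | n ≤ x} by simp; omega) hn
      have := hmax' n (by omega)
      omega
    induction j, hij using Nat.le_induction with
    | base => exact hmono i (by omega)
    | succ j hij ih => exact (ih (by omega)).trans (hmono j (by omega))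
  · exact antitoneOn_of_logConcave hlc hzero (hmax' (k₀ + 1) (by omega)) hki
      (show j ∈ {x | k₀ ≤ x} by simp; omega) hij.le

end Unimodal

section Ballot

def IsFirstMinOn {α : Type*} [LinearOrder α] (g : ℕ → α) (N n : ℕ) : Prop :=
  n ≤ N ∧ (∀ m ≤ N, g n ≤ g m) ∧ ∀ m < n, g n < g m

lemma IsFirstMinOn.unique {α : Type*} [LinearOrder α] {g : ℕ → α} {N n n' : ℕ}
    (h : IsFirstMinOn g N n) (h' : IsFirstMinOn g N n') : n = n' := by
  by_contra hne
  rcases Nat.lt_or_gt_of_ne hne with hlt | hlt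
  · exact (h'.2.2 n hlt).not_ge (h.2.1 n' h'.1)
  · exact (h.2.2 n' hlt).not_ge (h'.2.1 n h.1)

lemma exists_last_minimizer {α : Type*} [LinearOrder α] (g : ℕ → α) (N : ℕ) :
    ∃ p ≤ N, (∀ m ≤ N, g p ≤ g m) ∧ ∀ m ≤ N, p < m → g p < g m := by
  obtain ⟨a, ha, hamin⟩ := (range (N + 1)).exists_min_image g ⟨0, by simp⟩
  obtain ⟨p, hp, hplast⟩ := ((range (N + 1)).filter (g · = g a)).exists_max_image id
    ⟨a, by simp [ha]⟩
  simp only [mem_filter, mem_range, Nat.lt_succ_iff, id] at hp hamin hplast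
  refine ⟨p, hp.1, fun m hm => hp.2 ▸ hamin m hm, fun m hm hpm => ?_⟩
  refine lt_of_le_of_ne (hp.2 ▸ hamin m hm) fun heq => ?_
  exact absurd (hplast m ⟨hm, by rw [← heq, hp.2]⟩) (not_le.2 hpm)

lemma sum_range_update (σ : ℕ → ℤ) (q n : ℕ) (x : ℤ) :
    ∑ i ∈ range n, Function.update σ q x i =
      ∑ i ∈ range n, σ i + if q < n then x - σ q else 0 := by
  split_ifs with h
  · rw [sum_update_of_mem (mem_range.2 h), sdiff_singleton_eq_erase,
      ← add_sum_erase _ _ (mem_range.2 h)]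
    ring
  · rw [sum_update_of_notMem (by simpa using h), add_zero]

/-- The step `q` is the first nonzero step after the last minimum of the walk
`n ↦ ∑ i ∈ range n, σ i`. -/
theorem exists_flip_isFirstMinOn {σ : ℕ → ℤ} {N : ℕ} (hσ : ∀ i < N, |σ i| ≤ 1)
    (hsum : ∑ i ∈ range N, σ i = 2) :
    ∃ q < N, σ q = 1 ∧
      IsFirstMinOn (fun n => ∑ i ∈ range n, Function.update σ q (-1) i) N (q + 1) := by
  obtain ⟨p, hpN, hpmin, hplast⟩ := exists_last_minimizer (fun n => ∑ i ∈ range n, σ i) N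
  have hex : ∃ i, p ≤ i ∧ i < N ∧ σ i ≠ 0 := by
    by_contra! hall
    have hPN := sum_range_add_sum_Ico σ hpN
    rw [sum_eq_zero fun i hi => hall i (mem_Ico.1 hi).1 (mem_Ico.1 hi).2, add_zero, hsum] at hPN
    have := hpmin 0 (Nat.zero_le _)
    simp only [range_zero, sum_empty] at this
    omega
  set q := Nat.find hex
  obtain ⟨hpq, hqN, hq0⟩ := Nat.find_spec hex
  have hPq : ∑ i ∈ range q, σ i = ∑ i ∈ range p, σ i := by
    rw [← sum_range_add_sum_Ico σ hpq, add_eq_left]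
    refine sum_eq_zero fun i hi => ?_
    by_contra hi0
    obtain ⟨hpi, hiq⟩ := mem_Ico.1 hi
    exact Nat.find_min hex hiq ⟨hpi, hiq.trans hqN, hi0⟩
  have hPq1 : ∑ i ∈ range (q + 1), σ i = ∑ i ∈ range p, σ i + σ q := by
    rw [sum_range_succ, hPq]
  have hσq : σ q = 1 := by
    have := hplast (q + 1) (by omega) (by omega)
    have := abs_le.1 (hσ q hqN)
    omega
  refine ⟨q, hqN, hσq, by omega, fun m hm => ?_, fun m hm => ?_⟩
  · simp only [sum_range_update, hσq, hPq1, lt_add_one, if_true]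
    split_ifs with hqm
    · linarith [hplast m hm (by omega)]
    · linarith [hpmin m hm]
  · simp only [sum_range_update, hσq, hPq1, lt_add_one, if_true, if_neg (show ¬ q < m by omega)]
    linarith [hpmin m (by omega)]

end Ballot

section Matching

variable {V : Type*}

def IsEdgeMatching (M : Finset (Sym2 V)) : Prop :=
  ∀ e ∈ M, ∀ f ∈ M, e ≠ f → ∀ v : V, v ∈ e → v ∉ f

lemma IsEdgeMatching.mono {M M' : Finset (Sym2 V)} (h : IsEdgeMatching M) (hM' : M' ⊆ M) :
    IsEdgeMatching M' :=
  fun e he f hf => h e (hM' he) f (hM' hf)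

lemma IsEdgeMatching.two_mul_card_le {M : Finset (Sym2 V)} {S : Finset V} (hM : IsEdgeMatching M)
    (hloop : ∀ e ∈ M, ¬ e.IsDiag) (hS : ∀ e ∈ M, ∀ v ∈ e, v ∈ S) : 2 * #M ≤ #S := by
  calc 2 * #M = #(M.biUnion Sym2.toFinset) := by
        rw [card_biUnion fun e he f hf hef => disjoint_left.2 fun v hve hvf =>
          hM e he f hf hef v (Sym2.mem_toFinset.1 hve) (Sym2.mem_toFinset.1 hvf)]
        rw [sum_congr rfl fun e he => Sym2.card_toFinset_of_not_isDiag e (hloop e he)]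
        simp [mul_comm]
    _ ≤ #S := card_le_card fun v hv => by
        obtain ⟨e, he, hve⟩ := mem_biUnion.1 hv
        exact hS e he v (Sym2.mem_toFinset.1 hve)

end Matching

section Components

variable {V : Type*}

/-- The component of an endpoint of `e`; for `e ∈ U` every endpoint gives the same one. -/
noncomputable def edgeComponent (U : Finset (Sym2 V)) (e : Sym2 V) :
    (fromEdgeSet (U : Set (Sym2 V))).ConnectedComponent :=
  (fromEdgeSet (U : Set (Sym2 V))).connectedComponentMk e.out.1

noncomputable def componentEdges (U : Finset (Sym2 V))
    (c : (fromEdgeSet (U : Set (Sym2 V))).ConnectedComponent) : Finset (Sym2 V) :=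
  U.filter (edgeComponent U · = c)

lemma componentEdges_subset (U : Finset (Sym2 V))
    (c : (fromEdgeSet (U : Set (Sym2 V))).ConnectedComponent) : componentEdges U c ⊆ U :=
  filter_subset _ _

lemma connectedComponentMk_eq_edgeComponent {U : Finset (Sym2 V)} {e : Sym2 V} (he : e ∈ U)
    {v : V} (hv : v ∈ e) :
    (fromEdgeSet (U : Set (Sym2 V))).connectedComponentMk v = edgeComponent U e := by
  have hsame : ∀ w ∈ e, (fromEdgeSet (U : Set (Sym2 V))).connectedComponentMk v =
      (fromEdgeSet (U : Set (Sym2 V))).connectedComponentMk w := fun w hw => by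
    rcases eq_or_ne v w with rfl | hvw
    · rfl
    · refine ConnectedComponent.sound (Adj.reachable ?_)
      rw [fromEdgeSet_adj, ← (Sym2.mem_and_mem_iff hvw).1 ⟨hv, hw⟩]
      exact ⟨he, hvw⟩
  exact hsame _ (Sym2.out_fst_mem e)

lemma mem_componentEdges_of_mem_of_mem {U : Finset (Sym2 V)}
    {c : (fromEdgeSet (U : Set (Sym2 V))).ConnectedComponent} {e f : Sym2 V}
    (he : e ∈ componentEdges U c) (hf : f ∈ U) {v : V} (hve : v ∈ e) (hvf : v ∈ f) :
    f ∈ componentEdges U c := by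
  rw [componentEdges, mem_filter] at he ⊢
  rw [← connectedComponentMk_eq_edgeComponent hf hvf,
    connectedComponentMk_eq_edgeComponent he.1 hve]
  exact ⟨hf, he.2⟩

lemma card_supp_le_card_componentEdges_add_one (U : Finset (Sym2 V))
    (c : (fromEdgeSet (U : Set (Sym2 V))).ConnectedComponent) :
    Nat.card c.supp ≤ #(componentEdges U c) + 1 := by
  refine c.connected_toSimpleGraph.card_vert_le_card_edgeSet_add_one.trans
    (Nat.add_le_add_right ?_ 1)
  have hmem : ∀ e ∈ c.toSimpleGraph.edgeSet, e.map Subtype.val ∈ componentEdges U c := by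
    intro e he
    induction e using Sym2.ind with
    | _ u w =>
      have hadj : (fromEdgeSet (U : Set (Sym2 V))).Adj u w := by
        simpa [ConnectedComponent.toSimpleGraph] using he
      have hU : s(u.1, w.1) ∈ U := by simpa using ((fromEdgeSet_adj _).1 hadj).1
      rw [componentEdges, mem_filter, Sym2.map_mk,
        ← connectedComponentMk_eq_edgeComponent hU (Sym2.mem_mk_left _ _)]
      exact ⟨hU, u.2⟩
  calc Nat.card c.toSimpleGraph.edgeSet ≤ Nat.card (componentEdges U c) :=
        Nat.card_le_card_of_injective (fun e => ⟨e.1.map Subtype.val, hmem e.1 e.2⟩)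
          fun e f hef => Subtype.ext
            (Sym2.map.injective Subtype.val_injective (congrArg Subtype.val hef))
    _ = #(componentEdges U c) := Nat.card_eq_finsetCard _

lemma card_inter_componentEdges_le [Fintype V] {U A B : Finset (Sym2 V)} (hU : U ⊆ A ∪ B)
    (hB : IsEdgeMatching B) (hloop : ∀ e ∈ B, ¬ e.IsDiag)
    (c : (fromEdgeSet (U : Set (Sym2 V))).ConnectedComponent) :
    #(B ∩ componentEdges U c) ≤ #(A ∩ componentEdges U c) + 1 := by
  set E := componentEdges U c
  have hvert : 2 * #(B ∩ E) ≤ Nat.card c.supp := by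
    rw [Nat.card_eq_card_toFinset]
    refine (hB.mono inter_subset_left).two_mul_card_le
      (fun e he => hloop e (mem_of_mem_inter_left he)) fun e he v hv => ?_
    have he' := mem_filter.1 (mem_of_mem_inter_right he)
    simpa [ConnectedComponent.mem_supp_iff, connectedComponentMk_eq_edgeComponent he'.1 hv]
      using he'.2
  have hsplit : #E ≤ #(A ∩ E) + #(B ∩ E) := by
    calc #E = #((A ∩ E) ∪ (B ∩ E)) := by
          rw [← union_inter_distrib_right,
            inter_eq_right.2 ((componentEdges_subset _ _).trans hU)]
      _ ≤ _ := card_union_le _ _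
  have htree : Nat.card c.supp ≤ #E + 1 := card_supp_le_card_componentEdges_add_one U c
  omega

end Components

section Swap

variable {V : Type*}

noncomputable def swapOn (A B E : Finset (Sym2 V)) : Finset (Sym2 V) := (A \ E) ∪ (B ∩ E)

variable {A B E : Finset (Sym2 V)}

lemma swapOn_union_swapOn : swapOn A B E ∪ swapOn B A E = A ∪ B := by
  ext; simp only [swapOn, mem_union, mem_sdiff, mem_inter]; tauto

lemma swapOn_swapOn : swapOn (swapOn A B E) (swapOn B A E) E = A := by
  ext; simp only [swapOn, mem_union, mem_sdiff, mem_inter]; tauto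

lemma swapOn_inter_self : swapOn A B E ∩ E = B ∩ E := by
  ext; simp only [swapOn, mem_union, mem_sdiff, mem_inter]; tauto

lemma swapOn_inter_of_disjoint {E' : Finset (Sym2 V)} (h : Disjoint E E') :
    swapOn A B E ∩ E' = A ∩ E' := by
  ext x
  have : x ∈ E → x ∉ E' := fun hE => disjoint_left.1 h hE
  simp only [swapOn, mem_union, mem_sdiff, mem_inter]
  tauto

lemma card_swapOn_add : #(swapOn A B E) + #(A ∩ E) = #A + #(B ∩ E) := by
  have hdisj : Disjoint (A \ E) (B ∩ E) :=
    disjoint_left.2 fun x hA hB => (mem_sdiff.1 hA).2 (mem_inter.1 hB).2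
  rw [swapOn, card_union_of_disjoint hdisj, add_right_comm, card_sdiff_add_card_inter]

lemma IsEdgeMatching.swapOn (hA : IsEdgeMatching A) (hB : IsEdgeMatching B)
    (hE : ∀ g ∈ E, ∀ f ∈ A ∪ B, ∀ v ∈ g, v ∈ f → f ∈ E) : IsEdgeMatching (swapOn A B E) := by
  intro f hf g hg hfg v hvf hvg
  simp only [_root_.swapOn, mem_union, mem_sdiff, mem_inter] at hf hg
  rcases hf with ⟨hfA, hfE⟩ | ⟨hfB, hfE⟩ <;> rcases hg with ⟨hgA, hgE⟩ | ⟨hgB, hgE⟩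
  · exact hA f hfA g hgA hfg v hvf hvg
  · exact hfE (hE g hgE f (mem_union_left _ hfA) v hvg hvf)
  · exact hgE (hE f hfE g (mem_union_left _ hgA) v hvf hvg)
  · exact hB f hfB g hgB hfg v hvf hvg

end Swap

section Enumeration

variable {V : Type*} [Fintype V]

noncomputable abbrev numComponents (U : Finset (Sym2 V)) : ℕ :=
  Fintype.card (fromEdgeSet (U : Set (Sym2 V))).ConnectedComponent

noncomputable def nthComponentEdges (U : Finset (Sym2 V)) (i : ℕ) : Finset (Sym2 V) :=
  if h : i < numComponents U then
    componentEdges U ((Fintype.equivFin _).symm ⟨i, h⟩)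
  else ∅

lemma nthComponentEdges_eq_empty_or (U : Finset (Sym2 V)) (i : ℕ) :
    nthComponentEdges U i = ∅ ∨ ∃ c, nthComponentEdges U i = componentEdges U c := by
  unfold nthComponentEdges
  split_ifs
  · exact Or.inr ⟨_, rfl⟩
  · exact Or.inl rfl

lemma disjoint_nthComponentEdges (U : Finset (Sym2 V)) {i j : ℕ} (hij : i ≠ j) :
    Disjoint (nthComponentEdges U i) (nthComponentEdges U j) := by
  unfold nthComponentEdges
  split_ifs with hi hj
  · refine disjoint_filter.2 fun e _ hei hej => hij ?_
    simpa using (hei.symm.trans hej)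
  all_goals simp

lemma mem_nthComponentEdges_of_mem_of_mem {U : Finset (Sym2 V)} {i : ℕ} {e f : Sym2 V}
    (he : e ∈ nthComponentEdges U i) (hf : f ∈ U) {v : V} (hve : v ∈ e) (hvf : v ∈ f) :
    f ∈ nthComponentEdges U i := by
  rcases nthComponentEdges_eq_empty_or U i with h | ⟨c, h⟩ <;> rw [h] at he ⊢
  · simp at he
  · exact mem_componentEdges_of_mem_of_mem he hf hve hvf

lemma sum_card_inter_nthComponentEdges {U S : Finset (Sym2 V)} (hS : S ⊆ U) :
    ∑ i ∈ range (numComponents U), #(S ∩ nthComponentEdges U i) = #S := by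
  have hnth : ∀ i : Fin (numComponents U),
      nthComponentEdges U i = componentEdges U ((Fintype.equivFin _).symm i) := fun i =>
    dif_pos i.isLt
  simp only [sum_range, hnth]
  rw [(Fintype.equivFin _).symm.sum_comp (fun c => #(S ∩ componentEdges U c)),
    card_eq_sum_card_fiberwise (f := edgeComponent U) (t := univ) fun _ _ => mem_univ _]
  simp only [componentEdges, inter_filter, inter_eq_left.2 hS]

end Enumeration

section Surplus

variable {V : Type*} [Fintype V]

noncomputable def surplus (A B : Finset (Sym2 V)) (i : ℕ) : ℤ :=
  #(B ∩ nthComponentEdges (A ∪ B) i) - #(A ∩ nthComponentEdges (A ∪ B) i)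

variable {A B : Finset (Sym2 V)}

lemma abs_surplus_le_one (hA : IsEdgeMatching A) (hB : IsEdgeMatching B)
    (hAloop : ∀ e ∈ A, ¬ e.IsDiag) (hBloop : ∀ e ∈ B, ¬ e.IsDiag) (i : ℕ) :
    |surplus A B i| ≤ 1 := by
  rcases nthComponentEdges_eq_empty_or (A ∪ B) i with h | ⟨c, h⟩
  · simp [surplus, h]
  · have h1 := card_inter_componentEdges_le subset_rfl hB hBloop c
    have h2 := card_inter_componentEdges_le (union_comm A B).subset hA hAloop c
    rw [surplus, h, abs_le]
    omega

lemma sum_surplus :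
    ∑ i ∈ range (numComponents (A ∪ B)), surplus A B i = #B - #A := by
  simp only [surplus, sum_sub_distrib, ← Nat.cast_sum,
    sum_card_inter_nthComponentEdges subset_union_left,
    sum_card_inter_nthComponentEdges subset_union_right]

noncomputable def swapComponent (A B : Finset (Sym2 V)) (q : ℕ) :
    Finset (Sym2 V) × Finset (Sym2 V) :=
  (swapOn A B (nthComponentEdges (A ∪ B) q), swapOn B A (nthComponentEdges (A ∪ B) q))

lemma union_swapComponent (q : ℕ) :
    (swapComponent A B q).1 ∪ (swapComponent A B q).2 = A ∪ B :=
  swapOn_union_swapOn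

lemma swapComponent_swapComponent (q : ℕ) :
    swapComponent (swapComponent A B q).1 (swapComponent A B q).2 q = (A, B) := by
  rw [swapComponent, union_swapComponent]
  exact Prod.ext swapOn_swapOn swapOn_swapOn

lemma surplus_swapComponent (q : ℕ) :
    surplus (swapComponent A B q).1 (swapComponent A B q).2 =
      Function.update (surplus A B) q (-surplus A B q) := by
  funext i
  rw [surplus, union_swapComponent, swapComponent]
  rcases eq_or_ne i q with rfl | hiq
  · rw [Function.update_self, swapOn_inter_self, swapOn_inter_self, surplus]
    ring
  · have hdisj := disjoint_nthComponentEdges (A ∪ B) hiq.symm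
    rw [Function.update_of_ne hiq, swapOn_inter_of_disjoint hdisj, swapOn_inter_of_disjoint hdisj,
      surplus]

lemma exists_swapComponent_isFirstMinOn (hA : IsEdgeMatching A) (hB : IsEdgeMatching B)
    (hAloop : ∀ e ∈ A, ¬ e.IsDiag) (hBloop : ∀ e ∈ B, ¬ e.IsDiag) (hcard : #B = #A + 2) :
    ∃ q, surplus A B q = 1 ∧
      IsFirstMinOn
        (fun n => ∑ i ∈ range n, surplus (swapComponent A B q).1 (swapComponent A B q).2 i)
        (numComponents ((swapComponent A B q).1 ∪ (swapComponent A B q).2)) (q + 1) := by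
  obtain ⟨q, -, hq1, hqmin⟩ := exists_flip_isFirstMinOn
    (fun i _ => abs_surplus_le_one hA hB hAloop hBloop i)
    (by rw [sum_surplus, hcard]; push_cast; ring)
  exact ⟨q, hq1, by rwa [surplus_swapComponent, union_swapComponent, hq1]⟩

end Surplus

section LogConcave

variable {V : Type} [Fintype V] {G : SimpleGraph V}

noncomputable def matchingsOfCard (G : SimpleGraph V) (k : ℕ) : Finset (Finset (Sym2 V)) :=
  (G.edgeFinset.powersetCard k).filter IsEdgeMatching

lemma matchCount_eq_card_matchingsOfCard (G : SimpleGraph V) (k : ℕ) :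
    matchCount G k = #(matchingsOfCard G k) := by
  rw [matchCount, matchingsOfCard]
  congr

lemma mem_matchingsOfCard {k : ℕ} {M : Finset (Sym2 V)} :
    M ∈ matchingsOfCard G k ↔ M ⊆ G.edgeFinset ∧ #M = k ∧ IsEdgeMatching M := by
  rw [matchingsOfCard, mem_filter, mem_powersetCard, and_assoc]

lemma not_isDiag_of_subset_edgeFinset {M : Finset (Sym2 V)} (hM : M ⊆ G.edgeFinset) :
    ∀ e ∈ M, ¬ e.IsDiag :=
  fun _ he => G.not_isDiag_of_mem_edgeSet (mem_edgeFinset.1 (hM he))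

lemma swapOn_mem_matchingsOfCard {a b k : ℕ} {A B E : Finset (Sym2 V)}
    (hA : A ∈ matchingsOfCard G a) (hB : B ∈ matchingsOfCard G b)
    (hE : ∀ g ∈ E, ∀ f ∈ A ∪ B, ∀ v ∈ g, v ∈ f → f ∈ E) (hk : a + #(B ∩ E) = k + #(A ∩ E)) :
    swapOn A B E ∈ matchingsOfCard G k := by
  rw [mem_matchingsOfCard] at hA hB ⊢
  refine ⟨?_, ?_, hA.2.2.swapOn hB.2.2 hE⟩
  · exact union_subset (sdiff_subset.trans hA.1) (inter_subset_left.trans hB.1)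
  · have := card_swapOn_add (A := A) (B := B) (E := E)
    omega

lemma swapComponent_mem_matchingsOfCard {k q : ℕ} {A B : Finset (Sym2 V)}
    (hA : A ∈ matchingsOfCard G k) (hB : B ∈ matchingsOfCard G (k + 2)) (hq : surplus A B q = 1) :
    swapComponent A B q ∈ matchingsOfCard G (k + 1) ×ˢ matchingsOfCard G (k + 1) := by
  have hclosed : ∀ g ∈ nthComponentEdges (A ∪ B) q, ∀ f ∈ A ∪ B, ∀ v ∈ g, v ∈ f →
      f ∈ nthComponentEdges (A ∪ B) q := fun g hg f hf v hvg hvf =>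
    mem_nthComponentEdges_of_mem_of_mem hg hf hvg hvf
  rw [surplus, sub_eq_iff_eq_add'] at hq
  norm_cast at hq
  exact mem_product.2 ⟨swapOn_mem_matchingsOfCard hA hB hclosed (by omega),
    swapOn_mem_matchingsOfCard hB hA (union_comm A B ▸ hclosed) (by omega)⟩

lemma matchingsOfCard_nonempty_of_succ {k : ℕ} (h : (matchingsOfCard G (k + 1)).Nonempty) :
    (matchingsOfCard G k).Nonempty := by
  obtain ⟨M, hM⟩ := h
  rw [mem_matchingsOfCard] at hM
  obtain ⟨M', hM'M, hM'⟩ := exists_subset_card_eq (show k ≤ #M by omega)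
  exact ⟨M', mem_matchingsOfCard.2 ⟨hM'M.trans hM.1, hM', hM.2.2.mono hM'M⟩⟩

theorem matchCount_mul_le_sq (G : SimpleGraph V) (k : ℕ) :
    matchCount G k * matchCount G (k + 2) ≤ matchCount G (k + 1) ^ 2 := by
  simp only [matchCount_eq_card_matchingsOfCard, sq, ← card_product]
  have hflip : ∀ p ∈ matchingsOfCard G k ×ˢ matchingsOfCard G (k + 2),
      ∃ q, surplus p.1 p.2 q = 1 ∧
      IsFirstMinOn
        (fun n => ∑ i ∈ range n, surplus (swapComponent p.1 p.2 q).1 (swapComponent p.1 p.2 q).2 i)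
        (numComponents ((swapComponent p.1 p.2 q).1 ∪ (swapComponent p.1 p.2 q).2)) (q + 1) := by
    intro p hp
    obtain ⟨⟨hA, hAc, hAm⟩, ⟨hB, hBc, hBm⟩⟩ :=
      And.imp mem_matchingsOfCard.1 mem_matchingsOfCard.1 (mem_product.1 hp)
    exact exists_swapComponent_isFirstMinOn hAm hBm (not_isDiag_of_subset_edgeFinset hA)
      (not_isDiag_of_subset_edgeFinset hB) (by omega)
  choose! q hq1 hqmin using hflip
  refine card_le_card_of_injOn (fun p => swapComponent p.1 p.2 (q p))
    (fun p hp => swapComponent_mem_matchingsOfCard (mem_product.1 hp).1 (mem_product.1 hp).2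
      (hq1 p hp))
    fun p₁ hp₁ p₂ hp₂ h => ?_
  replace h : swapComponent p₁.1 p₁.2 (q p₁) = swapComponent p₂.1 p₂.2 (q p₂) := h
  have hq : q p₁ = q p₂ := by
    have h₂ := hqmin p₂ hp₂
    rw [← h] at h₂
    exact Nat.succ_injective ((hqmin p₁ hp₁).unique h₂)
  calc p₁ = swapComponent (swapComponent p₁.1 p₁.2 (q p₁)).1 (swapComponent p₁.1 p₁.2 (q p₁)).2
        (q p₁) := (swapComponent_swapComponent _).symm
    _ = p₂ := by rw [h, hq, swapComponent_swapComponent]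

end LogConcave

/-- for every finite simple graph `G` on `n` vertices, the sequence
`m_0(G), m_1(G), …, m_{⌊n/2⌋}(G)` of numbers of `k`-matchings is unimodal. -/
theorem matchCount_unimodal {V : Type} [Fintype V] (G : SimpleGraph V) :
    ∃ k₀ ≤ Fintype.card V / 2,
      (∀ i j : ℕ, i < j → j ≤ k₀ → matchCount G i ≤ matchCount G j) ∧
      (∀ i j : ℕ, k₀ ≤ i → i < j → j ≤ Fintype.card V / 2 →
        matchCount G j ≤ matchCount G i) := by
  refine unimodal_of_logConcave (matchCount_mul_le_sq G) (fun k hk => ?_) _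
  rw [matchCount_eq_card_matchingsOfCard, card_eq_zero, ← not_nonempty_iff_eq_empty] at hk ⊢
  exact mt matchingsOfCard_nonempty_of_succ hk
end
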